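/- arXiv:2210.02911 — 11 statements merged into one kernel-verified Lean document; each statement's English description precedes it below -/
import Mathlib

section
/- Suppose {u, v} is a PFSS of (r z')' = q z on ℝ, and let ρ = u·v. Then ∫_{-∞}^0 dt/(r(t)ρ(t)) = ∞ and ∫_0^∞ dt/(r(t)ρ(t)) = ∞. -/
open MeasureTheory Filter Set intervalIntegral

def IsSol (r q z : ℝ → ℝ) : Prop :=
  Differentiable ℝ z ∧ Differentiable ℝ (fun x => r x * deriv z x) ∧
    ∀ x, deriv (fun y => r y * deriv z y) x = q x * z x

def IsPFSS (r q u v : ℝ → ℝ) : Prop :=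
  IsSol r q u ∧ IsSol r q v ∧
  (∀ x, 0 < u x) ∧ (∀ x, 0 < v x) ∧
  (∀ x, deriv u x ≤ 0) ∧ (∀ x, 0 ≤ deriv v x) ∧
  (∀ x, r x * (deriv v x * u x - deriv u x * v x) = 1) ∧
  Tendsto (fun x => u x / v x) atTop (nhds 0) ∧
  Tendsto (fun x => v x / u x) atBot (nhds 0)

/-! Since `r (v' u - u' v) = 1`, the function `log (v / u)` is an antiderivative of `1 / (r ρ)`.
It tends to `+∞` at `+∞` and to `-∞` at `-∞`, because `u / v → 0` and `v / u → 0` there,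
whereas an antiderivative of a function integrable near `±∞` has a finite limit there. -/

open Real Topology

theorem not_integrableOn_Ioi_of_hasDerivAt_of_tendsto_norm_atTop {E : Type*}
    [NormedAddCommGroup E] [NormedSpace ℝ E] [CompleteSpace E] {f f' : ℝ → E} {a : ℝ}
    (hderiv : ∀ x ∈ Ioi a, HasDerivAt f (f' x) x) (hf : Tendsto (‖f ·‖) atTop atTop) :
    ¬ IntegrableOn f' (Ioi a) := fun hint =>
  not_tendsto_nhds_of_tendsto_atTop hf _
    (tendsto_limUnder_of_hasDerivAt_of_integrableOn_Ioi hderiv hint).norm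

theorem not_integrableOn_Iic_of_hasDerivAt_of_tendsto_norm_atBot {E : Type*}
    [NormedAddCommGroup E] [NormedSpace ℝ E] [CompleteSpace E] {f f' : ℝ → E} {a : ℝ}
    (hderiv : ∀ x ∈ Iic a, HasDerivAt f (f' x) x) (hf : Tendsto (‖f ·‖) atBot atTop) :
    ¬ IntegrableOn f' (Iic a) := fun hint =>
  not_tendsto_nhds_of_tendsto_atTop hf _
    (tendsto_limUnder_of_hasDerivAt_of_integrableOn_Iic hderiv hint).norm

theorem Real.tendsto_log_comp_atBot_of_tendsto_zero {α : Type*} {l : Filter α} {g : α → ℝ}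
    (hg : Tendsto g l (𝓝 0)) (hpos : ∀ᶠ x in l, 0 < g x) :
    Tendsto (fun x => log (g x)) l atBot :=
  tendsto_log_nhdsGT_zero.comp (tendsto_nhdsWithin_of_tendsto_nhds_of_eventually_within _ hg hpos)

theorem HasDerivAt.log_div {u v : ℝ → ℝ} {u' v' x : ℝ} (hu : HasDerivAt u u' x)
    (hv : HasDerivAt v v' x) (hux : u x ≠ 0) (hvx : v x ≠ 0) :
    HasDerivAt (fun y => Real.log (v y / u y)) ((v' * u x - u' * v x) / (u x * v x)) x := by
  refine ((hv.div hu hux).log (div_ne_zero hvx hux)).congr_deriv ?_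
  simp only [Pi.div_apply]
  field_simp

namespace IsPFSS

variable {r q u v : ℝ → ℝ}

theorem hasDerivAt_log_div (h : IsPFSS r q u v) (x : ℝ) :
    HasDerivAt (fun y => log (v y / u y)) (1 / (r x * (u x * v x))) x := by
  obtain ⟨hu, hv, hup, hvp, -, -, hW, -⟩ := h
  have hr : r x ≠ 0 := left_ne_zero_of_mul_eq_one (hW x)
  have hu0 := (hup x).ne'
  have hv0 := (hvp x).ne'
  refine ((hu.1 x).hasDerivAt.log_div (hv.1 x).hasDerivAt hu0 hv0).congr_deriv ?_
  field_simp
  linear_combination hW x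

theorem tendsto_log_div_atTop (h : IsPFSS r q u v) :
    Tendsto (fun x => log (v x / u x)) atTop atTop := by
  obtain ⟨-, -, hup, hvp, -, -, -, htop, -⟩ := h
  have hlog : Tendsto (fun x => log (u x / v x)) atTop atBot :=
    tendsto_log_comp_atBot_of_tendsto_zero htop (.of_forall fun x => div_pos (hup x) (hvp x))
  refine (tendsto_neg_atBot_atTop.comp hlog).congr fun x => ?_
  rw [Function.comp_apply, ← log_inv, inv_div]

theorem tendsto_log_div_atBot (h : IsPFSS r q u v) :
    Tendsto (fun x => log (v x / u x)) atBot atBot := by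
  obtain ⟨-, -, hup, hvp, -, -, -, -, hbot⟩ := h
  exact tendsto_log_comp_atBot_of_tendsto_zero hbot (.of_forall fun x => div_pos (hvp x) (hup x))

end IsPFSS

theorem stmt1 (r q u v : ℝ → ℝ) (h : IsPFSS r q u v)
    (ρ : ℝ → ℝ) (hρ : ∀ x, ρ x = u x * v x) :
    ¬ IntegrableOn (fun t => 1 / (r t * ρ t)) (Iic 0) ∧
    ¬ IntegrableOn (fun t => 1 / (r t * ρ t)) (Ioi 0) := by
  have hderiv : ∀ x, HasDerivAt (fun y => log (v y / u y)) (1 / (r x * ρ x)) x := fun x => by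
    simpa only [hρ] using h.hasDerivAt_log_div x
  exact ⟨not_integrableOn_Iic_of_hasDerivAt_of_tendsto_norm_atBot (fun x _ => hderiv x)
      (tendsto_abs_atBot_atTop.comp h.tendsto_log_div_atBot),
    not_integrableOn_Ioi_of_hasDerivAt_of_tendsto_norm_atTop (fun x _ => hderiv x)
      (tendsto_abs_atTop_atTop.comp h.tendsto_log_div_atTop)⟩
end

section
/- Suppose {u, v} is a PFSS of (r z')' = q z on ℝ. Then for all x ∈ ℝ: u(x) = v(x) ∫_x^∞ dt/(r(t) v(t)²) and v(x) = u(x) ∫_{-∞}^x dt/(r(t) u(t)²). -/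
/-!
The Wronskian identity `r (v' u - u' v) = 1` says exactly that `(u / v)' = -1 / (r v²)` and
`(v / u)' = 1 / (r u²)`; since `v' u - u' v ≥ 0`, it also forces `r > 0`. So `u / v` decreases to
`0` at `+∞` and `v / u` increases from `0` at `-∞`, and a monotone function with a limit is the
(absolutely convergent) improper integral of its derivative.
-/

open MeasureTheory Filter Set intervalIntegral

theorem integrableOn_Ioi_and_integral_eq_of_hasDerivAt_neg {g f : ℝ → ℝ} {a : ℝ}
    (hderiv : ∀ x ∈ Ici a, HasDerivAt g (-f x) x) (hf : ∀ x ∈ Ioi a, 0 ≤ f x)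
    (hg : Tendsto g atTop (nhds 0)) :
    IntegrableOn f (Ioi a) ∧ ∫ x in Ioi a, f x = g a := by
  have hderiv' : ∀ x ∈ Ici a, HasDerivAt (-g) (f x) x := fun x hx => by
    simpa using (hderiv x hx).neg
  have hg' : Tendsto (-g) atTop (nhds 0) := neg_zero (G := ℝ) ▸ hg.neg
  refine ⟨integrableOn_Ioi_deriv_of_nonneg' hderiv' hf hg', ?_⟩
  rw [integral_Ioi_of_hasDerivAt_of_nonneg' hderiv' hf hg']
  simp

theorem integrableOn_Iic_and_integral_eq_of_hasDerivAt {g f : ℝ → ℝ} {a : ℝ}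
    (hderiv : ∀ x ∈ Iic a, HasDerivAt g (f x) x) (hf : ∀ x ∈ Iio a, 0 ≤ f x)
    (hg : Tendsto g atBot (nhds 0)) :
    IntegrableOn f (Iic a) ∧ ∫ x in Iic a, f x = g a := by
  have hderiv' : ∀ x ∈ Ici (-a), HasDerivAt (fun x => g (-x)) (-f (-x)) x := fun x hx =>
    ((hderiv (-x) (neg_le.mp hx : -x ≤ a)).comp x (hasDerivAt_neg x)).congr_deriv (mul_neg_one _)
  obtain ⟨hint, hval⟩ := integrableOn_Ioi_and_integral_eq_of_hasDerivAt_neg hderiv'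
    (fun x hx => hf (-x) (neg_lt.mp hx : -x < a)) (hg.comp tendsto_neg_atTop_atBot)
  refine ⟨?_, by simpa using hval⟩
  rw [← (Measure.measurePreserving_neg volume).integrableOn_comp_preimage
    (Homeomorph.neg ℝ).measurableEmbedding]
  simpa [Function.comp_def, integrableOn_Ici_iff_integrableOn_Ioi] using hint

theorem hasDerivAt_div_of_wronskian {r u v : ℝ → ℝ} {t : ℝ} (hu : DifferentiableAt ℝ u t)
    (hv : DifferentiableAt ℝ v t) (hvt : v t ≠ 0)
    (hW : r t * (deriv v t * u t - deriv u t * v t) = 1) :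
    HasDerivAt (fun y => u y / v y) (-(1 / (r t * v t ^ 2))) t := by
  refine (hu.hasDerivAt.div hv.hasDerivAt hvt).congr_deriv ?_
  have hr : r t ≠ 0 := left_ne_zero_of_mul_eq_one hW
  field_simp
  linear_combination -hW

theorem IsPFSS.r_pos {r q u v : ℝ → ℝ} (h : IsPFSS r q u v) (t : ℝ) : 0 < r t := by
  obtain ⟨-, -, hu, hv, hu', hv', hW, -, -⟩ := h
  refine pos_of_mul_pos_left (hW t ▸ one_pos) ?_
  nlinarith [mul_nonneg (hv' t) (hu t).le, mul_nonneg (neg_nonneg.2 (hu' t)) (hv t).le]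

theorem stmt2 (r q u v : ℝ → ℝ) (h : IsPFSS r q u v) :
    ∀ x : ℝ, IntegrableOn (fun t => 1 / (r t * v t ^ 2)) (Ioi x) ∧
      IntegrableOn (fun t => 1 / (r t * u t ^ 2)) (Iic x) ∧
      u x = v x * ∫ t in Ioi x, 1 / (r t * v t ^ 2) ∧
      v x = u x * ∫ t in Iic x, 1 / (r t * u t ^ 2) := by
  intro x
  have hr := h.r_pos
  obtain ⟨⟨hu, -⟩, ⟨hv, -⟩, hu0, hv0, -, -, hW, htop, hbot⟩ := h
  have hW' t : -r t * (deriv u t * v t - deriv v t * u t) = 1 := by linear_combination hW t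
  obtain ⟨hIoi, hvalIoi⟩ := integrableOn_Ioi_and_integral_eq_of_hasDerivAt_neg
    (fun t _ => hasDerivAt_div_of_wronskian (hu t) (hv t) (hv0 t).ne' (hW t))
    (fun t _ => (one_div_pos.2 (mul_pos (hr t) (pow_pos (hv0 t) 2))).le) htop
  obtain ⟨hIic, hvalIic⟩ := integrableOn_Iic_and_integral_eq_of_hasDerivAt (a := x)
    (f := fun t => 1 / (r t * u t ^ 2))
    (fun t _ => by
      simpa using hasDerivAt_div_of_wronskian (r := (-r ·)) (hv t) (hu t) (hu0 t).ne' (hW' t))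
    (fun t _ => (one_div_pos.2 (mul_pos (hr t) (pow_pos (hu0 t) 2))).le) hbot
  refine ⟨hIoi, hIic, ?_, ?_⟩
  · rw [hvalIoi, mul_div_cancel₀ _ (hv0 x).ne']
  · rw [hvalIic, mul_div_cancel₀ _ (hu0 x).ne']
end

section
/- Suppose {u, v} is a PFSS of (r z')' = q z on ℝ. Then ∫_{-∞}^0 dt/(r(t)u(t)²) < ∞, ∫_0^∞ dt/(r(t)v(t)²) < ∞, while ∫_{-∞}^0 dt/(r(t)v(t)²) = ∞ and ∫_0^∞ dt/(r(t)u(t)²) = ∞. -/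
open MeasureTheory Filter Set intervalIntegral

/-!
The Wronskian identity `r (v'u - u'v) = 1` says that `(v/u)' = 1/(r u²)` and `(-u/v)' = 1/(r v²)`.
Both integrands are therefore derivatives of increasing functions, and a nonnegative derivative
is integrable near an end of the line exactly when its primitive has a finite limit there.
The quotients `v/u` and `u/v` tend to `0` at `-∞` and `+∞` respectively, and, being positive,
their reciprocals tend to `+∞` at the same ends.
-/

section ImproperDeriv

variable {f f' : ℝ → ℝ} {a : ℝ}

theorem integrableOn_Iic_deriv_of_nonneg' {l : ℝ} (hderiv : ∀ x ∈ Iic a, HasDerivAt f (f' x) x)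
    (hf' : ∀ x ∈ Iio a, 0 ≤ f' x) (hf : Tendsto f atBot (nhds l)) :
    IntegrableOn f' (Iic a) := by
  -- Reflect `x ↦ -x` and apply the `Ioi` version to `x ↦ -f (-x)`, whose derivative is `f' (-x)`.
  have hderiv_refl : ∀ x ∈ Ici (-a), HasDerivAt (fun x => -f (-x)) (f' (-x)) x := fun x hx => by
    have := ((hderiv (-x) (mem_Iic.mpr (neg_le.mp hx))).comp x (hasDerivAt_neg x)).neg
    rwa [mul_neg_one, neg_neg] at this
  have hint_refl : IntegrableOn (fun x => f' (-x)) (Ioi (-a)) :=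
    integrableOn_Ioi_deriv_of_nonneg' hderiv_refl
      (fun x hx => hf' (-x) (mem_Iio.mpr (neg_lt.mp hx))) (hf.comp tendsto_neg_atTop_atBot).neg
  rw [integrableOn_Iic_iff_integrableOn_Iio]
  have hpre : (fun x : ℝ => -x) ⁻¹' Iio a = Ioi (-a) := by ext x; simp
  rwa [← (Measure.measurePreserving_neg volume).integrableOn_comp_preimage
    (Homeomorph.neg ℝ).measurableEmbedding, hpre]

theorem not_integrableOn_Ioi_of_hasDerivAt_of_tendsto_atTop
    (hderiv : ∀ x ∈ Ioi a, HasDerivAt f (f' x) x) (hf : Tendsto f atTop atTop) :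
    ¬ IntegrableOn f' (Ioi a) := fun hint =>
  not_tendsto_nhds_of_tendsto_atTop hf _
    (tendsto_limUnder_of_hasDerivAt_of_integrableOn_Ioi hderiv hint)

theorem not_integrableOn_Iic_of_hasDerivAt_of_tendsto_atBot
    (hderiv : ∀ x ∈ Iic a, HasDerivAt f (f' x) x) (hf : Tendsto f atBot atBot) :
    ¬ IntegrableOn f' (Iic a) := fun hint =>
  not_tendsto_nhds_of_tendsto_atBot hf _
    (tendsto_limUnder_of_hasDerivAt_of_integrableOn_Iic hderiv hint)

end ImproperDeriv

theorem tendsto_div_atTop_of_tendsto_div_zero {α : Type*} {l : Filter α} {f g : α → ℝ}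
    (hf : ∀ x, 0 < f x) (hg : ∀ x, 0 < g x) (h : Tendsto (fun x => f x / g x) l (nhds 0)) :
    Tendsto (fun x => g x / f x) l atTop := by
  have h' : Tendsto (fun x => f x / g x) l (nhdsWithin 0 (Ioi 0)) :=
    tendsto_nhdsWithin_of_tendsto_nhds_of_eventually_within _ h
      (Eventually.of_forall fun x => div_pos (hf x) (hg x))
  simpa only [Pi.inv_def, inv_div] using h'.inv_tendsto_nhdsGT_zero

namespace IsPFSS

variable {r q u v : ℝ → ℝ} (h : IsPFSS r q u v)
include h

theorem coeff_pos (x : ℝ) : 0 < r x := by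
  obtain ⟨-, -, hu, hv, hu', hv', hW, -, -⟩ := h
  have hW_nonneg : 0 ≤ deriv v x * u x - deriv u x * v x := by
    nlinarith [mul_nonneg (hv' x) (hu x).le, mul_nonpos_of_nonpos_of_nonneg (hu' x) (hv x).le]
  exact pos_of_mul_pos_left (hW x ▸ one_pos) hW_nonneg

theorem one_div_mul_sq_nonneg {w : ℝ → ℝ} (hw : ∀ x, 0 < w x) (x : ℝ) :
    0 ≤ 1 / (r x * w x ^ 2) := by
  have := h.coeff_pos x
  have := hw x
  positivity

theorem hasDerivAt_div (x : ℝ) :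
    HasDerivAt (fun y => v y / u y) (1 / (r x * u x ^ 2)) x := by
  have hr := (h.coeff_pos x).ne'
  obtain ⟨⟨hu, -⟩, ⟨hv, -⟩, hu0, -, -, -, hW, -, -⟩ := h
  have hux := (hu0 x).ne'
  refine ((hv x).hasDerivAt.div (hu x).hasDerivAt hux).congr_deriv ?_
  field_simp
  linarith [hW x]

theorem hasDerivAt_neg_div (x : ℝ) :
    HasDerivAt (fun y => -(u y / v y)) (1 / (r x * v x ^ 2)) x := by
  have hr := (h.coeff_pos x).ne'
  obtain ⟨⟨hu, -⟩, ⟨hv, -⟩, -, hv0, -, -, hW, -, -⟩ := h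
  have hvx := (hv0 x).ne'
  refine ((hu x).hasDerivAt.div (hv x).hasDerivAt hvx).neg.congr_deriv ?_
  field_simp
  linarith [hW x]

theorem tendsto_div_atTop : Tendsto (fun x => v x / u x) atTop atTop := by
  obtain ⟨-, -, hu, hv, -, -, -, hu_div_v, -⟩ := h
  exact tendsto_div_atTop_of_tendsto_div_zero hu hv hu_div_v

theorem tendsto_neg_div_atBot : Tendsto (fun x => -(u x / v x)) atBot atBot := by
  obtain ⟨-, -, hu, hv, -, -, -, -, hv_div_u⟩ := h
  exact tendsto_neg_atBot_iff.mpr (tendsto_div_atTop_of_tendsto_div_zero hv hu hv_div_u)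

end IsPFSS

theorem stmt3 (r q u v : ℝ → ℝ) (h : IsPFSS r q u v) :
    IntegrableOn (fun t => 1 / (r t * u t ^ 2)) (Iic 0) ∧
    IntegrableOn (fun t => 1 / (r t * v t ^ 2)) (Ioi 0) ∧
    ¬ IntegrableOn (fun t => 1 / (r t * v t ^ 2)) (Iic 0) ∧
    ¬ IntegrableOn (fun t => 1 / (r t * u t ^ 2)) (Ioi 0) := by
  obtain ⟨-, -, hu, hv, -, -, -, hu_div_v, hv_div_u⟩ := id h
  refine ⟨?_, ?_, ?_, ?_⟩
  · exact integrableOn_Iic_deriv_of_nonneg' (fun x _ => h.hasDerivAt_div x)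
      (fun x _ => h.one_div_mul_sq_nonneg hu x) hv_div_u
  · exact integrableOn_Ioi_deriv_of_nonneg' (fun x _ => h.hasDerivAt_neg_div x)
      (fun x _ => h.one_div_mul_sq_nonneg hv x) (by simpa using hu_div_v.neg)
  · exact not_integrableOn_Iic_of_hasDerivAt_of_tendsto_atBot
      (fun x _ => h.hasDerivAt_neg_div x) h.tendsto_neg_div_atBot
  · exact not_integrableOn_Ioi_of_hasDerivAt_of_tendsto_atTop
      (fun x _ => h.hasDerivAt_div x) h.tendsto_div_atTop
end

section
/- Suppose the equation (r z')' = q z on ℝ has a PFSS {u, v}, and {u₁, v₁} is another PFSS of the same equation. Then there exists a constant α > 0 such that u₁ = α u and v₁ = α⁻¹ v. -/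
open MeasureTheory Filter Set intervalIntegral

noncomputable def wronskian (r f g : ℝ → ℝ) (x : ℝ) : ℝ :=
  r x * (deriv f x * g x - f x * deriv g x)

lemma wronskian_const_mul (r f g : ℝ → ℝ) (a b x : ℝ) :
    wronskian r (fun y => a * f y) (fun y => b * g y) x = a * b * wronskian r f g x := by
  simp only [wronskian, deriv_const_mul_field']
  ring

section Solutions

variable {r q f g w : ℝ → ℝ}

lemma IsSol.wronskian_eq (hf : IsSol r q f) (hg : IsSol r q g) (x y : ℝ) :
    wronskian r f g x = wronskian r f g y := by
  have hW : wronskian r f g = fun y => r y * deriv f y * g y - f y * (r y * deriv g y) := by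
    funext y
    simp only [wronskian]
    ring
  have hderiv : ∀ x, HasDerivAt (wronskian r f g) 0 x := by
    intro x
    have := ((hf.2.1 x).hasDerivAt.mul (hg.1 x).hasDerivAt).sub
      ((hf.1 x).hasDerivAt.mul (hg.2.1 x).hasDerivAt)
    rw [hf.2.2 x, hg.2.2 x] at this
    rw [hW]
    exact this.congr_deriv (by ring)
  exact is_const_of_deriv_eq_zero (fun x => (hderiv x).differentiableAt)
    (fun x => (hderiv x).deriv) x y

/-- The coefficients are the constants `W(f, w)` and `W(w, g)`, by the pointwise identity
`W(f, g) w = W(f, w) g + W(w, g) f`. -/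
lemma IsSol.exists_eq_const_mul_add (hw : IsSol r q w) (hg : IsSol r q g) (hf : IsSol r q f)
    (hfg : ∀ x, wronskian r f g x = 1) : ∃ a b : ℝ, ∀ x, w x = a * g x + b * f x := by
  refine ⟨wronskian r f w 0, wronskian r w g 0, fun x => ?_⟩
  rw [← hf.wronskian_eq hw x, ← hw.wronskian_eq hg x]
  have h1 := hfg x
  simp only [wronskian] at h1 ⊢
  linear_combination (-w x) * h1

end Solutions

lemma coeff_eq_zero_of_tendsto_div {l : Filter ℝ} [l.NeBot] {f g u v : ℝ → ℝ} {a b c d : ℝ}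
    (hf : ∀ x, f x = a * u x + b * v x) (hg : ∀ x, g x = c * u x + d * v x)
    (hv : ∀ x, v x ≠ 0) (hg₀ : ∀ x, g x ≠ 0)
    (huv : Tendsto (fun x => u x / v x) l (nhds 0))
    (hfg : Tendsto (fun x => f x / g x) l (nhds 0)) : b = 0 := by
  have hcomb : ∀ {a b : ℝ} {h : ℝ → ℝ}, (∀ x, h x = a * u x + b * v x) →
      Tendsto (fun x => h x / v x) l (nhds b) := by
    intro a b h hh
    have := (huv.const_mul a).add_const b
    rw [mul_zero, zero_add] at this
    refine this.congr fun x => ?_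
    rw [hh x]
    field_simp [hv x]
  have hfv : Tendsto (fun x => f x / v x) l (nhds 0) := by
    have := hfg.mul (hcomb hg)
    rw [zero_mul] at this
    exact this.congr fun x => div_mul_div_cancel₀ (hg₀ x)
  exact tendsto_nhds_unique (hcomb hf) hfv

lemma IsPFSS.wronskian_eq_one {r q u v : ℝ → ℝ} (h : IsPFSS r q u v) (x : ℝ) :
    wronskian r v u x = 1 := by
  rw [wronskian, ← h.2.2.2.2.2.2.1 x]
  ring

theorem stmt4 (r q u v u₁ v₁ : ℝ → ℝ) (h : IsPFSS r q u v) (h₁ : IsPFSS r q u₁ v₁) :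
    ∃ α : ℝ, 0 < α ∧ (∀ x, u₁ x = α * u x) ∧ (∀ x, v₁ x = α⁻¹ * v x) := by
  have hvu := h.wronskian_eq_one
  have hvu₁ := h₁.wronskian_eq_one
  obtain ⟨hsu, hsv, hu, hv, -, -, -, htop, hbot⟩ := h
  obtain ⟨hsu₁, hsv₁, hu₁, hv₁, -, -, -, htop₁, hbot₁⟩ := h₁
  obtain ⟨a, b, hu₁_eq⟩ := hsu₁.exists_eq_const_mul_add hsu hsv hvu
  obtain ⟨c, d, hv₁_eq⟩ := hsv₁.exists_eq_const_mul_add hsu hsv hvu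
  have hb : b = 0 := coeff_eq_zero_of_tendsto_div hu₁_eq hv₁_eq (fun x => (hv x).ne')
    (fun x => (hv₁ x).ne') htop htop₁
  have hc : c = 0 := coeff_eq_zero_of_tendsto_div (fun x => (hv₁_eq x).trans (add_comm _ _))
    (fun x => (hu₁_eq x).trans (add_comm _ _)) (fun x => (hu x).ne') (fun x => (hu₁ x).ne')
    hbot hbot₁
  have hu₁_smul : u₁ = fun x => a * u x :=
    funext fun x => by rw [hu₁_eq x, hb, zero_mul, add_zero]
  have hv₁_smul : v₁ = fun x => d * v x :=
    funext fun x => by rw [hv₁_eq x, hc, zero_mul, zero_add]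
  have ha : 0 < a := pos_of_mul_pos_left (congrFun hu₁_smul 0 ▸ hu₁ 0) (hu 0).le
  have hda : d * a = 1 := by
    have := hvu₁ 0
    rwa [hv₁_smul, hu₁_smul, wronskian_const_mul, hvu, mul_one] at this
  refine ⟨a, ha, congrFun hu₁_smul, fun x => ?_⟩
  rw [hv₁_smul, eq_inv_of_mul_eq_one_left hda]
end

section
/- Suppose ∫_{-∞}^0 dt/r(t) = ∫_0^∞ dt/r(t) = ∞ and q ≡ 0. Then the equation (r z')' = 0 on ℝ has no PFSS. -/
open MeasureTheory Filter Set intervalIntegral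

/-!
When `q = 0` the flux `r z'` of a solution is a constant `c`, so `z' = c / r`. A positive solution
with `c < 0` decreases to a finite limit at `+∞`, hence its derivative, and with it `1 / r`, is
integrable on `(0, ∞)`; symmetrically `c > 0` makes `1 / r` integrable on `(-∞, 0]`. Under the
divergence hypotheses every positive solution is therefore constant, and two constants have
Wronskian `0 ≠ 1`.
-/

section MonotoneBounded

variable {g : ℝ → ℝ}

theorem integrableOn_Ioi_deriv_of_nonneg_of_bddAbove (hg : Differentiable ℝ g)
    (hg' : ∀ x, 0 ≤ deriv g x) (hbdd : BddAbove (range g)) (a : ℝ) :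
    IntegrableOn (deriv g) (Ioi a) :=
  integrableOn_Ioi_deriv_of_nonneg' (fun x _ => (hg x).hasDerivAt) (fun x _ => hg' x)
    (tendsto_atTop_ciSup (monotone_of_deriv_nonneg hg hg') hbdd)

theorem integrableOn_Iic_deriv_of_nonneg_of_bddBelow (hg : Differentiable ℝ g)
    (hg' : ∀ x, 0 ≤ deriv g x) (hbdd : BddBelow (range g)) (a : ℝ) :
    IntegrableOn (deriv g) (Iic a) := by
  obtain ⟨m, hm⟩ := hbdd
  have hint : ∀ i, IntegrableOn (deriv g) (Ioc i a) := fun i =>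
    integrableOn_deriv_of_nonneg hg.continuous.continuousOn (fun x _ => (hg x).hasDerivAt)
      fun x _ => hg' x
  refine integrableOn_Iic_of_intervalIntegral_norm_bounded (g a - m) a hint tendsto_id ?_
  filter_upwards [eventually_le_atBot a] with i hi
  calc ∫ x in i..a, ‖deriv g x‖ = ∫ x in i..a, deriv g x := by
        simp only [Real.norm_of_nonneg (hg' _)]
    _ = g a - g i := integral_eq_sub_of_hasDerivAt (fun x _ => (hg x).hasDerivAt)
        ((intervalIntegrable_iff_integrableOn_Ioc_of_le hi).2 (hint i))
    _ ≤ g a - m := by linarith [hm (mem_range_self i)]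

end MonotoneBounded

namespace IsSol

variable {r z : ℝ → ℝ}

theorem flux_eq (hz : IsSol r (fun _ => 0) z) (x y : ℝ) :
    r x * deriv z x = r y * deriv z y :=
  is_const_of_deriv_eq_zero hz.2.1 (fun t => by simpa using hz.2.2 t) x y

theorem deriv_eq_zero_of_pos (hrpos : ∀ x, 0 < r x)
    (h1 : ¬ IntegrableOn (fun t => 1 / r t) (Iic 0))
    (h2 : ¬ IntegrableOn (fun t => 1 / r t) (Ioi 0))
    (hz : IsSol r (fun _ => 0) z) (hpos : ∀ x, 0 < z x) (x : ℝ) : deriv z x = 0 := by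
  set c := r 0 * deriv z 0
  have hderiv : ∀ t, deriv z t = c / r t := fun t => by
    rw [eq_div_iff (hrpos t).ne', mul_comm]
    exact hz.flux_eq t 0
  suffices hc : c = 0 by rw [hderiv, hc, zero_div]
  by_contra hc
  rcases lt_or_gt_of_ne hc with hneg | hposc
  · have hint := integrableOn_Ioi_deriv_of_nonneg_of_bddAbove (g := -z) hz.1.neg
      (fun t => by
        rw [deriv.neg, hderiv, ← neg_div]
        exact div_nonneg (neg_nonneg.2 hneg.le) (hrpos t).le)
      ⟨0, by rintro _ ⟨t, rfl⟩; exact neg_nonpos.2 (hpos t).le⟩ 0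
    refine h2 (IntegrableOn.congr_fun (hint.div_const (-c)) (fun t _ => ?_) measurableSet_Ioi)
    rw [deriv.neg, hderiv]
    field_simp [(hrpos t).ne']
  · have hint := integrableOn_Iic_deriv_of_nonneg_of_bddBelow hz.1
      (fun t => by
        rw [hderiv]
        exact div_nonneg hposc.le (hrpos t).le)
      ⟨0, by rintro _ ⟨t, rfl⟩; exact (hpos t).le⟩ 0
    refine h1 (IntegrableOn.congr_fun (hint.div_const c) (fun t _ => ?_) measurableSet_Iic)
    rw [hderiv]
    field_simp [(hrpos t).ne']

end IsSol

theorem stmt5_general (r : ℝ → ℝ) (hrpos : ∀ x, 0 < r x)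
    (h1 : ¬ IntegrableOn (fun t => 1 / r t) (Iic 0))
    (h2 : ¬ IntegrableOn (fun t => 1 / r t) (Ioi 0)) :
    ¬ ∃ u v : ℝ → ℝ, IsPFSS r (fun _ => 0) u v := by
  rintro ⟨u, v, hu, hv, hupos, hvpos, -, -, hW, -, -⟩
  have hW0 := hW 0
  rw [hu.deriv_eq_zero_of_pos hrpos h1 h2 hupos, hv.deriv_eq_zero_of_pos hrpos h1 h2 hvpos] at hW0
  simp at hW0

theorem stmt5 (r : ℝ → ℝ) (hrc : Continuous r) (hrpos : ∀ x, 0 < r x)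
    (h1 : ¬ IntegrableOn (fun t => 1 / r t) (Iic 0))
    (h2 : ¬ IntegrableOn (fun t => 1 / r t) (Ioi 0)) :
    ¬ ∃ u v : ℝ → ℝ, IsPFSS r (fun _ => 0) u v :=
  stmt5_general r hrpos h1 h2
end

section
/- With s(x) defined by ∫_{x-s(x)}^{x+s(x)} dt/(r(t)ρ(t)) = 1, we have x + s(x) → -∞ as x → -∞ and x - s(x) → ∞ as x → ∞; moreover there exists c ≥ 1 such that s(x) ≤ c(1+|x|) for all x ∈ ℝ. -/
/-! Every window `[x - s x, x + s x]` carries mass `1` of the positive density `1 / (r ρ)`,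
which has infinite mass on each half-line, so no window contains an interval of larger mass.
Far to the left, `[a, M]` has mass `> 1` for some `a < M`, so windows centred left of `a` end
before `M`; symmetrically on the right. Likewise `[0, b]` has mass `> 1` for some `b`, so no
window contains it, which forces `s x ≤ |x| + b`. -/

open MeasureTheory Filter Set intervalIntegral

namespace WindowIntegral

variable {f s : ℝ → ℝ} {C : ℝ}

lemma intervalIntegral_norm_eq (hf0 : 0 ≤ f) (a b : ℝ) :
    ∫ t in a..b, ‖f t‖ = ∫ t in a..b, f t :=
  integral_congr fun t _ => Real.norm_of_nonneg (hf0 t)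

lemma tendsto_intervalIntegral_atTop (hf0 : 0 ≤ f) (hloc : LocallyIntegrable f volume)
    {a : ℝ} (hdiv : ¬ IntegrableOn f (Ioi a)) (c : ℝ) :
    Tendsto (fun b => ∫ t in c..b, f t) atTop atTop := by
  have hii : ∀ u v, IntervalIntegrable f volume u v := fun u v =>
    (hloc.integrableOn_isCompact isCompact_uIcc).intervalIntegrable
  have from_a : Tendsto (fun b => ∫ t in a..b, f t) atTop atTop := by
    refine tendsto_atTop_atTop.2 fun I => ?_
    have unbounded : ∃ N, a ≤ N ∧ I ≤ ∫ t in a..N, f t := by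
      by_contra! hbdd
      refine hdiv (integrableOn_Ioi_of_intervalIntegral_norm_bounded (l := atTop) (b := id) I a
        (fun _ => (hloc.integrableOn_isCompact isCompact_Icc).mono_set Ioc_subset_Icc_self)
        tendsto_id ?_)
      filter_upwards [eventually_ge_atTop a] with b hb
      exact (intervalIntegral_norm_eq hf0 a b).trans_le (hbdd b hb).le
    obtain ⟨N, haN, hIN⟩ := unbounded
    exact ⟨N, fun b hNb => hIN.trans <|
      integral_mono_interval le_rfl haN hNb (ae_of_all _ hf0) (hii a b)⟩
  exact (tendsto_atTop_add_const_left _ _ from_a).congr fun b =>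
    integral_add_adjacent_intervals (hii c a) (hii a b)

lemma tendsto_intervalIntegral_atBot (hf0 : 0 ≤ f) (hloc : LocallyIntegrable f volume)
    {b : ℝ} (hdiv : ¬ IntegrableOn f (Iic b)) (c : ℝ) :
    Tendsto (fun a => ∫ t in a..c, f t) atBot atTop := by
  have hii : ∀ u v, IntervalIntegrable f volume u v := fun u v =>
    (hloc.integrableOn_isCompact isCompact_uIcc).intervalIntegrable
  have to_b : Tendsto (fun a => ∫ t in a..b, f t) atBot atTop := by
    refine tendsto_atBot_atTop.2 fun I => ?_
    have unbounded : ∃ N, N ≤ b ∧ I ≤ ∫ t in N..b, f t := by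
      by_contra! hbdd
      refine hdiv (integrableOn_Iic_of_intervalIntegral_norm_bounded (l := atBot) (a := id) I b
        (fun _ => (hloc.integrableOn_isCompact isCompact_Icc).mono_set Ioc_subset_Icc_self)
        tendsto_id ?_)
      filter_upwards [eventually_le_atBot b] with a ha
      exact (intervalIntegral_norm_eq hf0 a b).trans_le (hbdd a ha).le
    obtain ⟨N, hNb, hIN⟩ := unbounded
    exact ⟨N, fun a haN => hIN.trans <|
      integral_mono_interval haN hNb le_rfl (ae_of_all _ hf0) (hii a b)⟩
  exact (tendsto_atTop_add_const_right _ _ to_b).congr fun a =>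
    integral_add_adjacent_intervals (hii a b) (hii b c)

lemma lt_or_lt_of_intervalIntegral_lt (hf0 : 0 ≤ f) (hloc : LocallyIntegrable f volume)
    {a b u v : ℝ} (hab : a ≤ b) (hlt : ∫ t in u..v, f t < ∫ t in a..b, f t) : a < u ∨ v < b := by
  by_contra! hsub
  exact (integral_mono_interval hsub.1 hab hsub.2 (ae_of_all _ hf0)
    (hloc.integrableOn_isCompact isCompact_uIcc).intervalIntegrable).not_gt hlt

variable (hf0 : 0 ≤ f) (hloc : LocallyIntegrable f volume)
  (hsC : ∀ x, ∫ t in (x - s x)..(x + s x), f t ≤ C)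
include hf0 hloc hsC

lemma tendsto_add_atBot (hdiv : ¬ IntegrableOn f (Iic 0)) :
    Tendsto (fun x => x + s x) atBot atBot := by
  refine tendsto_atBot.2 fun M => ?_
  obtain ⟨a, hC, haM⟩ := (((tendsto_intervalIntegral_atBot hf0 hloc hdiv M).eventually_gt_atTop
    C).and (eventually_le_atBot M)).exists
  filter_upwards [eventually_le_atBot a] with x hxa
  by_contra! hMx
  rcases lt_or_lt_of_intervalIntegral_lt hf0 hloc haM ((hsC x).trans_lt hC) with h | h <;>
    linarith

lemma tendsto_sub_atTop (hdiv : ¬ IntegrableOn f (Ioi 0)) :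
    Tendsto (fun x => x - s x) atTop atTop := by
  refine tendsto_atTop.2 fun M => ?_
  obtain ⟨b, hC, hMb⟩ := (((tendsto_intervalIntegral_atTop hf0 hloc hdiv M).eventually_gt_atTop
    C).and (eventually_ge_atTop M)).exists
  filter_upwards [eventually_ge_atTop b] with x hbx
  by_contra! hxM
  rcases lt_or_lt_of_intervalIntegral_lt hf0 hloc hMb ((hsC x).trans_lt hC) with h | h <;>
    linarith

lemma exists_le_mul_one_add_abs (hdiv : ¬ IntegrableOn f (Ioi 0)) :
    ∃ c : ℝ, 1 ≤ c ∧ ∀ x, s x ≤ c * (1 + |x|) := by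
  obtain ⟨b, hC, hb0⟩ := (((tendsto_intervalIntegral_atTop hf0 hloc hdiv 0).eventually_gt_atTop
    C).and (eventually_ge_atTop 0)).exists
  have hs_le : ∀ x, s x ≤ |x| + b := fun x => by
    by_contra! hlarge
    rcases lt_or_lt_of_intervalIntegral_lt hf0 hloc hb0 ((hsC x).trans_lt hC) with h | h <;>
      linarith [le_abs_self x, neg_abs_le x]
  refine ⟨max b 1, le_max_right _ _, fun x => ?_⟩
  have hx : |x| ≤ max b 1 * |x| := le_mul_of_one_le_left (abs_nonneg x) (le_max_right _ _)
  linarith [hs_le x, le_max_left b 1]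

end WindowIntegral

open WindowIntegral in
theorem stmt8_general (r ρ s : ℝ → ℝ) (hr : ∀ x, 0 < r x) (hρ : ∀ x, 0 < ρ x)
    (hloc : LocallyIntegrable (fun t => 1 / (r t * ρ t)) volume)
    (hdiv1 : ¬ IntegrableOn (fun t => 1 / (r t * ρ t)) (Iic 0))
    (hdiv2 : ¬ IntegrableOn (fun t => 1 / (r t * ρ t)) (Ioi 0))
    (hs : ∀ x, 0 < s x ∧ (∫ t in (x - s x)..(x + s x), 1 / (r t * ρ t)) = 1) :
    Tendsto (fun x => x + s x) atBot atBot ∧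
    Tendsto (fun x => x - s x) atTop atTop ∧
    ∃ c : ℝ, 1 ≤ c ∧ ∀ x, s x ≤ c * (1 + |x|) := by
  have hf0 : 0 ≤ fun t => 1 / (r t * ρ t) := fun t => by
    have := mul_pos (hr t) (hρ t)
    positivity
  have hsC : ∀ x, ∫ t in (x - s x)..(x + s x), 1 / (r t * ρ t) ≤ 1 := fun x => (hs x).2.le
  exact ⟨tendsto_add_atBot hf0 hloc hsC hdiv1, tendsto_sub_atTop hf0 hloc hsC hdiv2,
    exists_le_mul_one_add_abs hf0 hloc hsC hdiv2⟩

theorem stmt8 (r ρ s : ℝ → ℝ) (hr : ∀ x, 0 < r x) (hρ : ∀ x, 0 < ρ x)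
    (hρc : Continuous ρ)
    (hloc : LocallyIntegrable (fun t => 1 / (r t * ρ t)) volume)
    (hdiv1 : ¬ IntegrableOn (fun t => 1 / (r t * ρ t)) (Iic 0))
    (hdiv2 : ¬ IntegrableOn (fun t => 1 / (r t * ρ t)) (Ioi 0))
    (hs : ∀ x, 0 < s x ∧ (∫ t in (x - s x)..(x + s x), 1 / (r t * ρ t)) = 1) :
    Tendsto (fun x => x + s x) atBot atBot ∧
    Tendsto (fun x => x - s x) atTop atTop ∧
    ∃ c : ℝ, 1 ≤ c ∧ ∀ x, s x ≤ c * (1 + |x|) :=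
  stmt8_general r ρ s hr hρ hloc hdiv1 hdiv2 hs
end

section
/- Let {u, v} be a PFSS of (r z')' = q z with generating function ρ = u v, and let s(x) solve ∫_{x-s(x)}^{x+s(x)} dt/(r ρ) = 1. Then for all t ∈ [x - s(x), x + s(x)]: e⁻¹ ρ(x) ≤ ρ(t) ≤ e ρ(x), e⁻¹ u(x) ≤ u(t) ≤ e u(x), and e⁻¹ v(x) ≤ v(t) ≤ e v(x). -/
/-!
Since `u' ≤ 0 ≤ v'`, the logarithmic derivatives of `u`, `v` and `ρ = u v` are all bounded
in absolute value by `(log v - log u)' = v'/v - u'/u`, which the Wronskian identity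
`r (v' u - u' v) = 1` turns into `1 / (r ρ)`. Hence on `[x - s, x + s]` the logarithms of
`u`, `v` and `ρ` oscillate by at most `∫_{x-s}^{x+s} dt / (r ρ) = 1`.
-/

open MeasureTheory Filter Set intervalIntegral

open Real

theorem abs_sub_le_sub_of_abs_deriv_le {f g f' g' : ℝ → ℝ}
    (hf : ∀ y, HasDerivAt f (f' y) y) (hg : ∀ y, HasDerivAt g (g' y) y)
    (hbound : ∀ y, |f' y| ≤ g' y) {a b : ℝ} (hab : a ≤ b) :
    |f b - f a| ≤ g b - g a := by
  have hsub : Monotone (fun y => g y - f y) :=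
    monotone_of_hasDerivAt_nonneg (fun y => (hg y).sub (hf y))
      (fun y => sub_nonneg.2 (le_of_abs_le (hbound y)) : ∀ y, 0 ≤ g' y - f' y)
  have hadd : Monotone (fun y => g y + f y) :=
    monotone_of_hasDerivAt_nonneg (fun y => (hg y).add (hf y))
      (fun y => neg_le_iff_add_nonneg.1 ((neg_le_abs _).trans (hbound y)) :
        ∀ y, 0 ≤ g' y + f' y)
  have h₁ := hsub hab
  have h₂ := hadd hab
  simp only at h₁ h₂
  exact abs_le.2 ⟨by linarith, by linarith⟩

theorem abs_sub_le_sub_of_abs_deriv_le_of_mem_Icc {f g f' g' : ℝ → ℝ}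
    (hf : ∀ y, HasDerivAt f (f' y) y) (hg : ∀ y, HasDerivAt g (g' y) y)
    (hbound : ∀ y, |f' y| ≤ g' y) {a b x y : ℝ} (hx : x ∈ Icc a b) (hy : y ∈ Icc a b) :
    |f y - f x| ≤ g b - g a := by
  wlog hxy : x ≤ y generalizing x y
  · rw [abs_sub_comm]
    exact this hy hx (le_of_not_ge hxy)
  have hg_mono : Monotone g := fun p q hpq =>
    sub_nonneg.1 ((abs_nonneg _).trans (abs_sub_le_sub_of_abs_deriv_le hf hg hbound hpq))
  calc |f y - f x| ≤ g y - g x := abs_sub_le_sub_of_abs_deriv_le hf hg hbound hxy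
    _ ≤ g b - g a := by linarith [hg_mono hx.1, hg_mono hy.2]

theorem div_exp_le_and_le_exp_mul_of_abs_log_sub_le {A B c : ℝ} (hA : 0 < A) (hB : 0 < B)
    (h : |log B - log A| ≤ c) :
    A / exp c ≤ B ∧ B ≤ exp c * A := by
  obtain ⟨h₁, h₂⟩ := abs_le.1 h
  rw [← exp_log hA, ← exp_log hB, ← exp_sub, ← exp_add]
  exact ⟨exp_le_exp.2 (by linarith), exp_le_exp.2 (by linarith)⟩

namespace IsPFSS

variable {r q u v : ℝ → ℝ}

theorem differentiable_u (h : IsPFSS r q u v) : Differentiable ℝ u := h.1.1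

theorem differentiable_v (h : IsPFSS r q u v) : Differentiable ℝ v := h.2.1.1

theorem u_pos (h : IsPFSS r q u v) (y : ℝ) : 0 < u y := h.2.2.1 y

theorem v_pos (h : IsPFSS r q u v) (y : ℝ) : 0 < v y := h.2.2.2.1 y

theorem logDeriv_u_nonpos (h : IsPFSS r q u v) (y : ℝ) : logDeriv u y ≤ 0 :=
  div_nonpos_of_nonpos_of_nonneg (h.2.2.2.2.1 y) (h.u_pos y).le

theorem logDeriv_v_nonneg (h : IsPFSS r q u v) (y : ℝ) : 0 ≤ logDeriv v y :=
  div_nonneg (h.2.2.2.2.2.1 y) (h.v_pos y).le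

theorem logDeriv_v_sub_logDeriv_u (h : IsPFSS r q u v) (y : ℝ) :
    logDeriv v y - logDeriv u y = 1 / (r y * (u y * v y)) := by
  obtain ⟨-, -, hu, hv, -, -, hW, -, -⟩ := h
  have hr : r y ≠ 0 := left_ne_zero_of_mul_eq_one (hW y)
  rw [logDeriv_apply, logDeriv_apply]
  field_simp [(hu y).ne', (hv y).ne', hr]
  linear_combination hW y

theorem hasDerivAt_log_v_sub_log_u (h : IsPFSS r q u v) (y : ℝ) :
    HasDerivAt (fun z => log (v z) - log (u z)) (1 / (r y * (u y * v y))) y := by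
  rw [← h.logDeriv_v_sub_logDeriv_u y]
  exact ((h.differentiable_v y).hasDerivAt.log (h.v_pos y).ne').sub
    ((h.differentiable_u y).hasDerivAt.log (h.u_pos y).ne')

theorem abs_logDeriv_u_le (h : IsPFSS r q u v) (y : ℝ) :
    |logDeriv u y| ≤ 1 / (r y * (u y * v y)) := by
  rw [← h.logDeriv_v_sub_logDeriv_u, abs_of_nonpos (h.logDeriv_u_nonpos y)]
  linarith [h.logDeriv_v_nonneg y]

theorem abs_logDeriv_v_le (h : IsPFSS r q u v) (y : ℝ) :
    |logDeriv v y| ≤ 1 / (r y * (u y * v y)) := by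
  rw [← h.logDeriv_v_sub_logDeriv_u, abs_of_nonneg (h.logDeriv_v_nonneg y)]
  linarith [h.logDeriv_u_nonpos y]

theorem abs_logDeriv_mul_le (h : IsPFSS r q u v) (y : ℝ) :
    |logDeriv (fun z => u z * v z) y| ≤ 1 / (r y * (u y * v y)) := by
  rw [logDeriv_mul y (h.u_pos y).ne' (h.v_pos y).ne' (h.differentiable_u y)
    (h.differentiable_v y), ← h.logDeriv_v_sub_logDeriv_u, abs_le]
  constructor <;> linarith [h.logDeriv_u_nonpos y, h.logDeriv_v_nonneg y]

theorem div_exp_le_and_le_exp_mul (h : IsPFSS r q u v) {z : ℝ → ℝ} (hz : Differentiable ℝ z)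
    (hpos : ∀ y, 0 < z y) (hbound : ∀ y, |logDeriv z y| ≤ 1 / (r y * (u y * v y)))
    {a b x t : ℝ} (hint : ∫ y in a..b, 1 / (r y * (u y * v y)) = 1)
    (hx : x ∈ Icc a b) (ht : t ∈ Icc a b) :
    z x / exp 1 ≤ z t ∧ z t ≤ exp 1 * z x := by
  have hFTC : (log (v b) - log (u b)) - (log (v a) - log (u a)) = 1 := by
    rw [← hint, integral_eq_sub_of_hasDerivAt (fun y _ => h.hasDerivAt_log_v_sub_log_u y)
      (intervalIntegrable_of_integral_ne_zero (by rw [hint]; exact one_ne_zero))]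
  apply div_exp_le_and_le_exp_mul_of_abs_log_sub_le (hpos x) (hpos t)
  rw [← hFTC]
  exact abs_sub_le_sub_of_abs_deriv_le_of_mem_Icc
    (fun y => (hz y).hasDerivAt.log (hpos y).ne') h.hasDerivAt_log_v_sub_log_u hbound hx ht

end IsPFSS

theorem stmt9 (r q u v ρ s : ℝ → ℝ) (h : IsPFSS r q u v) (hρ : ∀ x, ρ x = u x * v x)
    (hs : ∀ x, 0 < s x ∧ (∫ t in (x - s x)..(x + s x), 1 / (r t * ρ t)) = 1)
    (x t : ℝ) (ht : t ∈ Icc (x - s x) (x + s x)) :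
    ρ x / Real.exp 1 ≤ ρ t ∧ ρ t ≤ Real.exp 1 * ρ x ∧
    u x / Real.exp 1 ≤ u t ∧ u t ≤ Real.exp 1 * u x ∧
    v x / Real.exp 1 ≤ v t ∧ v t ≤ Real.exp 1 * v x := by
  obtain rfl : ρ = fun y => u y * v y := funext hρ
  obtain ⟨hs_pos, hint⟩ := hs x
  have hx : x ∈ Icc (x - s x) (x + s x) := ⟨by linarith, by linarith⟩
  obtain ⟨hρ₁, hρ₂⟩ := h.div_exp_le_and_le_exp_mul
    (h.differentiable_u.mul h.differentiable_v) (fun y => mul_pos (h.u_pos y) (h.v_pos y))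
    h.abs_logDeriv_mul_le hint hx ht
  obtain ⟨hu₁, hu₂⟩ := h.div_exp_le_and_le_exp_mul h.differentiable_u h.u_pos
    h.abs_logDeriv_u_le hint hx ht
  obtain ⟨hv₁, hv₂⟩ := h.div_exp_le_and_le_exp_mul h.differentiable_v h.v_pos
    h.abs_logDeriv_v_le hint hx ht
  exact ⟨hρ₁, hρ₂, hu₁, hu₂, hv₁, hv₂⟩
end

section
/- Let {u, v} be a PFSS of (r z')' = q z, G(x,t) = u(max(x,t)) v(min(x,t)) the Green function. Then ∫_{-∞}^∞ q(t) G(x,t) dt ≤ 1 for every x ∈ ℝ. -/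
open MeasureTheory Filter Set intervalIntegral

/-!
On `[a, x]` the Green function is `u x * v t` and on `[x, b]` it is `v x * u t`. Since
`(r z')' = q z`, integrating against `q` is a boundary evaluation of `r z'`, and the
Wronskian identity collapses the truncated integral to
`1 - u x * r a * v' a + v x * r b * u' b`. The Wronskian identity also forces `r > 0`, so
with `u' ≤ 0 ≤ v'` both corrections are nonpositive and every truncated integral is at most
`1`. The integral over `ℝ` is their limit when it exists and (Bochner's junk value) `0`
otherwise.
-/

lemma integral_le_of_forall_intervalIntegral_le {f : ℝ → ℝ} {C : ℝ} (hC : 0 ≤ C) (x : ℝ)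
    (hf : ∀ a b, a ≤ x → x ≤ b → ∫ t in a..b, f t ≤ C) : ∫ t, f t ≤ C := by
  by_cases hint : Integrable f
  · refine le_of_tendsto (intervalIntegral_tendsto_integral hint tendsto_fst tendsto_snd) ?_
    filter_upwards [(eventually_le_atBot x).prod_inl atTop,
      (eventually_ge_atTop x).prod_inr atBot] with p ha hb
    exact hf p.1 p.2 ha hb
  · rw [integral_undef hint]
    exact hC

lemma MeasureTheory.LocallyIntegrable.intervalIntegrable_mul_continuous {q z : ℝ → ℝ}
    (hq : LocallyIntegrable q volume) (hz : Continuous z) (a b : ℝ) :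
    IntervalIntegrable (fun t => q t * z t) volume a b :=
  (hq.integrableOn_isCompact isCompact_uIcc).intervalIntegrable.mul_continuousOn hz.continuousOn

lemma IsSol.intervalIntegral_mul_eq {r q z : ℝ → ℝ} (hz : IsSol r q z)
    (hq : LocallyIntegrable q volume) (a b : ℝ) :
    ∫ t in a..b, q t * z t = r b * deriv z b - r a * deriv z a := by
  have hd : deriv (fun y => r y * deriv z y) = fun t => q t * z t := funext hz.2.2
  have hint := hq.intervalIntegrable_mul_continuous hz.1.continuous a b
  rw [← hd] at hint ⊢
  exact integral_deriv_eq_sub (fun t _ => hz.2.1 t) hint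

namespace IsPFSS

variable {r q u v : ℝ → ℝ}

lemma r_pos_s11 (h : IsPFSS r q u v) (x : ℝ) : 0 < r x := by
  obtain ⟨-, -, hu, hv, hu', hv', hW, -, -⟩ := h
  have hWronskian : 0 ≤ deriv v x * u x - deriv u x * v x := by
    nlinarith [hu x, hv x, hu' x, hv' x]
  exact pos_of_mul_pos_left ((hW x).symm ▸ one_pos) hWronskian

lemma continuous_green (h : IsPFSS r q u v) (x : ℝ) :
    Continuous fun t => u (max x t) * v (min x t) :=
  (h.1.1.continuous.comp (continuous_const.max continuous_id)).mul
    (h.2.1.1.continuous.comp (continuous_const.min continuous_id))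

lemma intervalIntegral_green (h : IsPFSS r q u v) (hq : LocallyIntegrable q volume)
    {a b x : ℝ} (ha : a ≤ x) (hb : x ≤ b) :
    ∫ t in a..b, q t * (u (max x t) * v (min x t)) =
      1 - u x * (r a * deriv v a) + v x * (r b * deriv u b) := by
  have hint := hq.intervalIntegrable_mul_continuous (h.continuous_green x)
  obtain ⟨hu, hv, -, -, -, -, hW, -, -⟩ := h
  have hleft : ∫ t in a..x, q t * (u (max x t) * v (min x t)) =
      u x * ∫ t in a..x, q t * v t := by
    rw [← intervalIntegral.integral_const_mul]
    refine integral_congr fun t ht => ?_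
    rw [uIcc_of_le ha] at ht
    simp only [max_eq_left ht.2, min_eq_right ht.2]
    ring
  have hright : ∫ t in x..b, q t * (u (max x t) * v (min x t)) =
      v x * ∫ t in x..b, q t * u t := by
    rw [← intervalIntegral.integral_const_mul]
    refine integral_congr fun t ht => ?_
    rw [uIcc_of_le hb] at ht
    simp only [max_eq_right ht.1, min_eq_left ht.1]
    ring
  rw [← integral_add_adjacent_intervals (hint a x) (hint x b), hleft, hright,
    hv.intervalIntegral_mul_eq hq, hu.intervalIntegral_mul_eq hq]
  linear_combination hW x

lemma intervalIntegral_green_le_one (h : IsPFSS r q u v) (hq : LocallyIntegrable q volume)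
    {a b x : ℝ} (ha : a ≤ x) (hb : x ≤ b) :
    ∫ t in a..b, q t * (u (max x t) * v (min x t)) ≤ 1 := by
  rw [h.intervalIntegral_green hq ha hb]
  have hr := h.r_pos_s11
  obtain ⟨-, -, hu, hv, hu', hv', -, -, -⟩ := h
  have hva : 0 ≤ u x * (r a * deriv v a) :=
    mul_nonneg (hu x).le (mul_nonneg (hr a).le (hv' a))
  have hub : v x * (r b * deriv u b) ≤ 0 :=
    mul_nonpos_of_nonneg_of_nonpos (hv x).le (mul_nonpos_of_nonneg_of_nonpos (hr b).le (hu' b))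
  linarith

end IsPFSS

theorem stmt11_general (r q u v : ℝ → ℝ) (h : IsPFSS r q u v)
    (hqloc : LocallyIntegrable q volume)
    (G : ℝ → ℝ → ℝ) (hG : ∀ x t, G x t = u (max x t) * v (min x t)) :
    ∀ x : ℝ, (∫ t, q t * G x t) ≤ 1 := by
  intro x
  simp only [hG]
  exact integral_le_of_forall_intervalIntegral_le zero_le_one x fun a b ha hb =>
    h.intervalIntegral_green_le_one hqloc ha hb

theorem stmt11 (r q u v : ℝ → ℝ) (h : IsPFSS r q u v)
    (hq : ∀ x, 0 ≤ q x) (hqloc : LocallyIntegrable q volume)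
    (G : ℝ → ℝ → ℝ) (hG : ∀ x t, G x t = u (max x t) * v (min x t)) :
    ∀ x : ℝ, (∫ t, q t * G x t) ≤ 1 :=
  stmt11_general r q u v h hqloc G hG
end

section
/- Let r > 0 with 1/r ∈ L¹(ℝ) and suppose (r z')' = q z has a PFSS {u, v}. Then ρ(x) = u(x)v(x) ≤ τ · (∫_{-∞}^x dt/r(t)) · (∫_x^∞ dt/r(t)) for all x ∈ ℝ, where τ = max{(∫_{-∞}^0 dt/r)⁻¹, (∫_0^∞ dt/r)⁻¹}. -/
open MeasureTheory Filter Set intervalIntegral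

/-!
Since `u` decreases, for `t ≤ x` the derivative `1 / (r u²)` of `v / u` at `t` is at most
`1 / (r(t) u(x)²)`. Integrating from `a` to `x` and letting `a → -∞`, where `v / u → 0`, gives
`v(x) / u(x) ≤ u(x)⁻² ∫_{-∞}^x 1/r`, that is `u v ≤ ∫_{-∞}^x 1/r`; symmetrically `u v ≤ ∫_x^∞ 1/r`.
For `x ≥ 0` the first integral is at least `∫_{-∞}^0 1/r`, so
`u v ≤ ∫_x^∞ 1/r ≤ (∫_{-∞}^0 1/r)⁻¹ (∫_{-∞}^x 1/r) (∫_x^∞ 1/r)`, and for `x ≤ 0` the roles swap.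
-/

open Topology

theorem setIntegral_pos_of_forall_pos {X : Type*} [MeasurableSpace X] {μ : Measure X}
    {s : Set X} {f : X → ℝ} (hf : IntegrableOn f s μ) (hpos : ∀ x, 0 < f x) (hs : 0 < μ s) :
    0 < ∫ x in s, f x ∂μ := by
  rwa [setIntegral_pos_iff_support_of_nonneg_ae (ae_of_all _ fun x => (hpos x).le) hf,
    Function.support_eq_univ fun x => (hpos x).ne', univ_inter]

theorem le_max_inv_mul_mul {p a b a₀ b₀ : ℝ} (hp : 0 ≤ p) (hpa : p ≤ a) (hpb : p ≤ b)
    (ha₀ : 0 < a₀) (hb₀ : 0 < b₀) (hab : a₀ ≤ a ∨ b₀ ≤ b) :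
    p ≤ max a₀⁻¹ b₀⁻¹ * (a * b) := by
  rcases hab with ha | hb
  · calc p ≤ a₀⁻¹ * a * b := hpb.trans <| le_mul_of_one_le_left (hp.trans hpb)
          ((one_le_inv_mul₀ ha₀).2 ha)
      _ ≤ max a₀⁻¹ b₀⁻¹ * (a * b) := by
        rw [mul_assoc]; gcongr
        · exact mul_nonneg (ha₀.le.trans ha) (hp.trans hpb)
        · exact le_max_left _ _
  · calc p ≤ b₀⁻¹ * b * a := hpa.trans <| le_mul_of_one_le_left (hp.trans hpa)
          ((one_le_inv_mul₀ hb₀).2 hb)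
      _ ≤ max a₀⁻¹ b₀⁻¹ * (a * b) := by
        rw [mul_assoc, mul_comm b]; gcongr
        · exact mul_nonneg (hp.trans hpa) (hb₀.le.trans hb)
        · exact le_max_right _ _

section QuotientBounds

variable {u v w : ℝ → ℝ}

theorem sub_div_le_integral_div_sq (hu : ∀ x, 0 < u x) (hanti : Antitone u)
    (hw : Integrable w) (hw0 : ∀ x, 0 ≤ w x)
    (hderiv : ∀ x, HasDerivAt (fun y => v y / u y) (w x / u x ^ 2) x) {a x : ℝ} (hax : a ≤ x) :
    v x / u x - v a / u a ≤ (∫ t in a..x, w t) / u x ^ 2 := by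
  rw [← intervalIntegral.integral_div]
  refine sub_le_integral_of_hasDeriv_right_of_le hax
    (fun t _ => (hderiv t).continuousAt.continuousWithinAt)
    (fun t _ => (hderiv t).hasDerivWithinAt) (hw.div_const _).integrableOn fun t ht => ?_
  have hut : u x ^ 2 ≤ u t ^ 2 := pow_le_pow_left₀ (hu x).le (hanti ht.2.le) 2
  exact div_le_div_of_nonneg_left (hw0 t) (pow_pos (hu x) 2) hut

theorem mul_le_setIntegral_Iic (hu : ∀ x, 0 < u x) (hanti : Antitone u)
    (hw : Integrable w) (hw0 : ∀ x, 0 ≤ w x)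
    (hderiv : ∀ x, HasDerivAt (fun y => v y / u y) (w x / u x ^ 2) x)
    (hlim : Tendsto (fun y => v y / u y) atBot (𝓝 0)) (x : ℝ) :
    u x * v x ≤ ∫ t in Iic x, w t := by
  set I := ∫ t in Iic x, w t
  have hbound : ∀ a ≤ x, v x / u x ≤ v a / u a + I / u x ^ 2 := fun a hax => by
    have hsub : ∫ t in a..x, w t ≤ I := by
      rw [intervalIntegral.integral_of_le hax]
      exact setIntegral_mono_set hw.integrableOn (ae_of_all _ hw0)
        Ioc_subset_Iic_self.eventuallyLE
    have hquot := sub_div_le_integral_div_sq hu hanti hw hw0 hderiv hax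
    have hdiv : (∫ t in a..x, w t) / u x ^ 2 ≤ I / u x ^ 2 := by gcongr
    linarith
  have hquot : v x / u x ≤ I / u x ^ 2 := by
    have hlim' := hlim.add_const (I / u x ^ 2)
    rw [zero_add] at hlim'
    exact ge_of_tendsto hlim' (eventually_atBot.2 ⟨x, hbound⟩)
  have hux := hu x
  rw [div_le_div_iff₀ hux (by positivity)] at hquot
  nlinarith

theorem mul_le_setIntegral_Ioi (hv : ∀ x, 0 < v x) (hmono : Monotone v)
    (hw : Integrable w) (hw0 : ∀ x, 0 ≤ w x)
    (hderiv : ∀ x, HasDerivAt (fun y => u y / v y) (-(w x / v x ^ 2)) x)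
    (hlim : Tendsto (fun y => u y / v y) atTop (𝓝 0)) (x : ℝ) :
    u x * v x ≤ ∫ t in Ioi x, w t := by
  have hrefl := mul_le_setIntegral_Iic (u := fun y => v (-y)) (v := fun y => u (-y))
    (w := fun y => w (-y)) (fun y => hv (-y)) (hmono.comp_antitone fun _ _ h => neg_le_neg h)
    hw.comp_neg (fun y => hw0 (-y))
    (fun y => ((hderiv (-y)).comp y (hasDerivAt_neg' y)).congr_deriv (by ring))
    (hlim.comp tendsto_neg_atBot_atTop) (-x)
  rwa [integral_comp_neg_Iic, neg_neg, mul_comm] at hrefl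

end QuotientBounds

namespace IsPFSS

variable {r q u v : ℝ → ℝ}

theorem wronskian_eq (h : IsPFSS r q u v) (x : ℝ) :
    deriv v x * u x - deriv u x * v x = 1 / r x := by
  obtain ⟨-, -, -, -, -, -, hW, -⟩ := h
  exact eq_one_div_of_mul_eq_one_right (hW x)

theorem one_div_r_pos (h : IsPFSS r q u v) (x : ℝ) : 0 < 1 / r x := by
  rw [← h.wronskian_eq]
  obtain ⟨-, -, hu, hv, hu', hv', hW, -⟩ := h
  refine lt_of_le_of_ne ?_ fun h0 => by simpa [← h0] using hW x
  nlinarith [mul_nonneg (hv' x) (hu x).le, mul_nonpos_of_nonpos_of_nonneg (hu' x) (hv x).le]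

theorem hasDerivAt_v_div_u (h : IsPFSS r q u v) (x : ℝ) :
    HasDerivAt (fun y => v y / u y) (1 / r x / u x ^ 2) x := by
  rw [← h.wronskian_eq]
  obtain ⟨⟨hu, -⟩, ⟨hv, -⟩, hu0, -⟩ := h
  refine ((hv x).hasDerivAt.div (hu x).hasDerivAt (hu0 x).ne').congr_deriv ?_
  ring

theorem hasDerivAt_u_div_v (h : IsPFSS r q u v) (x : ℝ) :
    HasDerivAt (fun y => u y / v y) (-(1 / r x / v x ^ 2)) x := by
  rw [← h.wronskian_eq]
  obtain ⟨⟨hu, -⟩, ⟨hv, -⟩, -, hv0, -⟩ := h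
  refine ((hu x).hasDerivAt.div (hv x).hasDerivAt (hv0 x).ne').congr_deriv ?_
  ring

theorem mul_le_integral_Iic (h : IsPFSS r q u v) (hint : Integrable fun t => 1 / r t) (x : ℝ) :
    u x * v x ≤ ∫ t in Iic x, 1 / r t := by
  have hw0 t := (h.one_div_r_pos t).le
  have hderiv := h.hasDerivAt_v_div_u
  obtain ⟨⟨hu, -⟩, -, hu0, -, hu', -, -, -, hlim⟩ := h
  exact mul_le_setIntegral_Iic hu0 (antitone_of_deriv_nonpos hu hu') hint hw0 hderiv hlim x

theorem mul_le_integral_Ioi (h : IsPFSS r q u v) (hint : Integrable fun t => 1 / r t) (x : ℝ) :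
    u x * v x ≤ ∫ t in Ioi x, 1 / r t := by
  have hw0 t := (h.one_div_r_pos t).le
  have hderiv := h.hasDerivAt_u_div_v
  obtain ⟨-, ⟨hv, -⟩, -, hv0, -, hv', -, hlim, -⟩ := h
  exact mul_le_setIntegral_Ioi hv0 (monotone_of_deriv_nonneg hv hv') hint hw0 hderiv hlim x

end IsPFSS

theorem stmt14 (r q u v : ℝ → ℝ) (h : IsPFSS r q u v)
    (hint : Integrable (fun t => 1 / r t)) :
    ∀ x : ℝ, u x * v x ≤
      max (∫ t in Iic (0:ℝ), 1 / r t)⁻¹ (∫ t in Ioi (0:ℝ), 1 / r t)⁻¹ *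
        ((∫ t in Iic x, 1 / r t) * (∫ t in Ioi x, 1 / r t)) := by
  intro x
  have hw := h.one_div_r_pos
  have hIic y : 0 < ∫ t in Iic y, 1 / r t :=
    setIntegral_pos_of_forall_pos hint.integrableOn hw (by simp)
  have hIoi y : 0 < ∫ t in Ioi y, 1 / r t :=
    setIntegral_pos_of_forall_pos hint.integrableOn hw (by simp)
  refine le_max_inv_mul_mul (mul_pos (h.2.2.1 x) (h.2.2.2.1 x)).le (h.mul_le_integral_Iic hint x)
    (h.mul_le_integral_Ioi hint x) (hIic 0) (hIoi 0) ?_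
  rcases le_total 0 x with hx | hx
  · exact Or.inl <| setIntegral_mono_set hint.integrableOn (ae_of_all _ fun t => (hw t).le)
      (Iic_subset_Iic.2 hx).eventuallyLE
  · exact Or.inr <| setIntegral_mono_set hint.integrableOn (ae_of_all _ fun t => (hw t).le)
      (Ioi_subset_Ioi hx).eventuallyLE
end

section
/- Let r(x) = (1+x²)^α with 1/2 < α < 1, and let ρ(x) = (1/w₀) ∫_{-∞}^x dt/r(t) · ∫_x^∞ dt/r(t) with w₀ = ∫_ℝ dt/r(t). Then ρ(x)|x|^{2α-1} → 1/(2α-1) as |x| → ∞. -/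
open MeasureTheory Filter Set intervalIntegral

/-!
Both factors of `ρ` are tails of the integrable weight `(1 + t²)^(-α)`. As `x → ∞` the factor
`∫_{-∞}^x` tends to `w₀`, which cancels the prefactor `1 / w₀`, while for `t ≥ x > 0` the weight
is squeezed between `(1 + x⁻²)^(-α) t^(-2α)` and `t^(-2α)`, so `∫_x^∞ ~ x^(1-2α) / (2α - 1)`.
The weight is even, hence so is `ρ`, and `x → -∞` reduces to `x → ∞`.
-/

open Real Topology

section Integrals

variable {E : Type*} [NormedAddCommGroup E] [NormedSpace ℝ E]

theorem tendsto_setIntegral_Iic_atTop {μ : Measure ℝ} {f : ℝ → E} (hf : Integrable f μ) :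
    Tendsto (fun x => ∫ t in Iic x, f t ∂μ) atTop (𝓝 (∫ t, f t ∂μ)) := by
  have h := tendsto_setIntegral_of_monotone (fun x : ℝ => measurableSet_Iic)
    (fun _ _ hxy => Iic_subset_Iic.2 hxy) (by rw [iUnion_Iic]; exact hf.integrableOn)
  rwa [iUnion_Iic, setIntegral_univ] at h

theorem setIntegral_Iic_neg_of_even {f : ℝ → E} (hf : f.Even) (x : ℝ) :
    ∫ t in Iic (-x), f t = ∫ t in Ioi x, f t := by
  simp only [← integral_comp_neg_Ioi, hf _]

theorem setIntegral_Ioi_neg_of_even {f : ℝ → E} (hf : f.Even) (x : ℝ) :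
    ∫ t in Ioi (-x), f t = ∫ t in Iic x, f t := by
  simp only [← integral_comp_neg_Iic, hf _]

end Integrals

theorem integral_Ioi_rpow_neg_mul_rpow {p x : ℝ} (hp : 1 < p) (hx : 0 < x) :
    (∫ t in Ioi x, t ^ (-p)) * x ^ (p - 1) = 1 / (p - 1) := by
  rw [integral_Ioi_rpow_of_lt (by linarith) hx, neg_div, ← div_neg, neg_add', neg_neg,
    div_mul_eq_mul_div, ← rpow_add hx]
  simp

section Weight

variable {α : ℝ}

theorem integrable_one_add_sq_rpow_neg (hα : 1 / 2 < α) :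
    Integrable fun x : ℝ => (1 + x ^ 2) ^ (-α) := by
  have h := integrable_rpow_neg_one_add_norm_sq (E := ℝ) (μ := volume) (r := 2 * α)
    (by simp only [Module.finrank_self, Nat.cast_one]; linarith)
  simpa [neg_div] using h

theorem one_add_sq_rpow_neg_le_rpow (hα : 0 ≤ α) {t : ℝ} (ht : 0 < t) :
    (1 + t ^ 2) ^ (-α) ≤ t ^ (-(2 * α)) := by
  rw [neg_mul_eq_mul_neg, rpow_mul ht.le, rpow_two]
  exact rpow_le_rpow_of_nonpos (by positivity) (by linarith) (by linarith)

theorem one_add_inv_sq_rpow_neg_mul_le (hα : 0 ≤ α) {x t : ℝ} (hx : 0 < x) (hxt : x ≤ t) :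
    (1 + x⁻¹ ^ 2) ^ (-α) * t ^ (-(2 * α)) ≤ (1 + t ^ 2) ^ (-α) := by
  have ht : 0 < t := hx.trans_le hxt
  rw [neg_mul_eq_mul_neg, rpow_mul ht.le, rpow_two, ← mul_rpow (by positivity) (by positivity)]
  refine rpow_le_rpow_of_nonpos (by positivity) ?_ (by linarith)
  have : 1 ≤ (t * x⁻¹) ^ 2 := one_le_pow₀ ((one_le_div hx).2 hxt)
  nlinarith

theorem tendsto_integral_Ioi_one_add_sq_rpow_neg_mul_rpow (hα : 1 / 2 < α) :
    Tendsto (fun x => (∫ t in Ioi x, (1 + t ^ 2) ^ (-α)) * x ^ (2 * α - 1)) atTop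
      (𝓝 (1 / (2 * α - 1))) := by
  have hp : 1 < 2 * α := by linarith
  have hint := integrable_one_add_sq_rpow_neg hα
  have hlower : Tendsto (fun x : ℝ => (1 + x⁻¹ ^ 2) ^ (-α) * (1 / (2 * α - 1))) atTop
      (𝓝 (1 / (2 * α - 1))) := by
    have h : Tendsto (fun x : ℝ => 1 + x⁻¹ ^ 2) atTop (𝓝 1) := by
      simpa using ((tendsto_inv_atTop_zero (𝕜 := ℝ)).pow 2).const_add (1 : ℝ)
    simpa using (h.rpow_const (Or.inl one_ne_zero)).mul_const (1 / (2 * α - 1))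
  refine tendsto_of_tendsto_of_tendsto_of_le_of_le' hlower tendsto_const_nhds ?_ ?_
    <;> filter_upwards [eventually_gt_atTop 0] with x hx
    <;> rw [← integral_Ioi_rpow_neg_mul_rpow hp hx]
  · rw [← mul_assoc, ← MeasureTheory.integral_const_mul]
    refine mul_le_mul_of_nonneg_right ?_ (by positivity)
    refine setIntegral_mono_on ((integrableOn_Ioi_rpow_of_lt (by linarith) hx).const_mul _)
      hint.integrableOn measurableSet_Ioi fun t ht => ?_
    exact one_add_inv_sq_rpow_neg_mul_le (by linarith) hx (le_of_lt ht)
  · refine mul_le_mul_of_nonneg_right ?_ (by positivity)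
    refine setIntegral_mono_on hint.integrableOn (integrableOn_Ioi_rpow_of_lt (by linarith) hx)
      measurableSet_Ioi fun t ht => ?_
    exact one_add_sq_rpow_neg_le_rpow (by linarith) (hx.trans ht)

theorem integral_one_add_sq_rpow_neg_pos (hα : 1 / 2 < α) :
    0 < ∫ t : ℝ, (1 + t ^ 2) ^ (-α) := by
  refine (integral_pos_iff_support_of_nonneg (fun t => by positivity)
    (integrable_one_add_sq_rpow_neg hα)).2 ?_
  rw [Function.support_eq_univ fun t => (by positivity : (0 : ℝ) < (1 + t ^ 2) ^ (-α)).ne']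
  simp

end Weight

theorem stmt16_general (α : ℝ) (hα1 : 1 / 2 < α) (r : ℝ → ℝ)
    (hr : ∀ x, r x = (1 + x ^ 2) ^ α) (w₀ : ℝ) (hw : w₀ = ∫ t, 1 / r t) (ρ : ℝ → ℝ)
    (hρ : ∀ x, ρ x = (1 / w₀) * ((∫ t in Iic x, 1 / r t) * (∫ t in Ioi x, 1 / r t))) :
    Tendsto (fun x => ρ x * |x| ^ (2 * α - 1)) atTop (nhds (1 / (2 * α - 1))) ∧
    Tendsto (fun x => ρ x * |x| ^ (2 * α - 1)) atBot (nhds (1 / (2 * α - 1))) := by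
  have hr' : ∀ t, 1 / r t = (1 + t ^ 2) ^ (-α) := fun t => by
    rw [hr, one_div, rpow_neg (by positivity)]
  simp only [hr'] at hw hρ
  have hw₀ : w₀ ≠ 0 := hw ▸ (integral_one_add_sq_rpow_neg_pos hα1).ne'
  have hTop : Tendsto (fun x => ρ x * |x| ^ (2 * α - 1)) atTop (𝓝 (1 / (2 * α - 1))) := by
    have h := ((tendsto_setIntegral_Iic_atTop (integrable_one_add_sq_rpow_neg hα1)).const_mul
      (1 / w₀)).mul (tendsto_integral_Ioi_one_add_sq_rpow_neg_mul_rpow hα1)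
    rw [← hw, one_div_mul_cancel hw₀, one_mul] at h
    refine h.congr' ?_
    filter_upwards [eventually_gt_atTop 0] with x hx
    rw [hρ, abs_of_pos hx]
    ring
  have heven : (fun t : ℝ => (1 + t ^ 2) ^ (-α)).Even := fun t => by simp
  refine ⟨hTop, (hTop.comp tendsto_neg_atBot_atTop).congr fun x => ?_⟩
  simp only [Function.comp_apply, hρ, abs_neg, setIntegral_Iic_neg_of_even heven,
    setIntegral_Ioi_neg_of_even heven]
  ring

theorem stmt16 (α : ℝ) (hα1 : 1 / 2 < α) (hα2 : α < 1) (r : ℝ → ℝ)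
    (hr : ∀ x, r x = (1 + x ^ 2) ^ α) (w₀ : ℝ) (hw : w₀ = ∫ t, 1 / r t) (ρ : ℝ → ℝ)
    (hρ : ∀ x, ρ x = (1 / w₀) * ((∫ t in Iic x, 1 / r t) * (∫ t in Ioi x, 1 / r t))) :
    Tendsto (fun x => ρ x * |x| ^ (2 * α - 1)) atTop (nhds (1 / (2 * α - 1))) ∧
    Tendsto (fun x => ρ x * |x| ^ (2 * α - 1)) atBot (nhds (1 / (2 * α - 1))) :=
  stmt16_general α hα1 r hr w₀ hw ρ hρ
end

section
/- Suppose {u, v} is a PFSS of (r z')' = q z, {u₁, v₁} is a PFSS of (r z')' = q₁ z, and there is a solution û of the first equation with û(x)/u₁(x) → 1 as x → ∞. If moreover û = α u + β v for constants α, β, then β = 0 and α > 0; consequently u(x)/u₁(x) → 1/α and ρ(x)/ρ₁(x) → 1 as x → ∞, where ρ = uv, ρ₁ = u₁v₁. -/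
open MeasureTheory Filter Set intervalIntegral

/-!
By the normalised Wronskian, `(v/u)' = 1/(r u²)` and `(u/v)' = -1/(r v²)` for any PFSS. Since
`u/v → 0`, `û = αu + βv` gives `û/v → β`, hence `u₁/v → β`. L'Hôpital's rule in the `∞/∞` form
applied to `(u/v)/(v₁/u₁)`, whose derivative quotient is `-(u₁/v)²`, yields `-β² = 0`, because
`u/v → 0` while `v₁/u₁ → ∞`. With `β = 0` the hypothesis reads `α u/u₁ → 1`, and the same rule
applied to `(v/u)/(v₁/u₁)`, with derivative quotient `(u₁/u)² → α²`, gives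
`ρ/ρ₁ = (u/u₁)² (v/u)/(v₁/u₁) → 1`.
-/

open Asymptotics Topology

theorem isLittleO_of_hasDerivAt_of_isLittleO {H G h g : ℝ → ℝ} (hH : ∀ x, HasDerivAt H (h x) x)
    (hG : ∀ x, HasDerivAt G (g x) x) (hg : ∀ x, 0 ≤ g x) (hGtop : Tendsto G atTop atTop)
    (hhg : h =o[atTop] g) : H =o[atTop] G := by
  refine isLittleO_iff.2 fun ε hε => ?_
  obtain ⟨N, hN⟩ := eventually_atTop.1 (hhg.def (half_pos hε))
  have hbound : ∀ x, N ≤ x → ‖H x - H N‖ ≤ ε / 2 * (G x - G N) := by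
    intro x hx
    refine image_norm_le_of_norm_deriv_right_le_deriv_boundary (a := N) (b := x)
      (f' := h) (B' := fun y => ε / 2 * g y)
      (fun y _ => ((hH y).sub_const _).continuousAt.continuousWithinAt)
      (fun y _ => ((hH y).sub_const _).hasDerivWithinAt) (by simp)
      (fun y => ((hG y).sub_const _).const_mul _) (fun y hy => ?_) ⟨hx, le_rfl⟩
    simpa [abs_of_nonneg (hg y)] using hN y hy.1
  filter_upwards [eventually_ge_atTop N, hGtop.eventually_ge_atTop 0,
    (hGtop.const_mul_atTop (half_pos hε)).eventually_ge_atTop (‖H N‖ - ε / 2 * G N)]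
    with x hxN hGx hGbig
  calc ‖H x‖ ≤ ‖H N‖ + ‖H x - H N‖ := norm_le_norm_add_norm_sub' _ _
    _ ≤ ε * ‖G x‖ := by
      rw [Real.norm_of_nonneg hGx]
      linarith [hbound x hxN]

theorem lhopital_atTop_of_tendsto_atTop {F G f g : ℝ → ℝ} (hF : ∀ x, HasDerivAt F (f x) x)
    (hG : ∀ x, HasDerivAt G (g x) x) (hg : ∀ x, 0 < g x) (hGtop : Tendsto G atTop atTop) {L : ℝ}
    (hfg : Tendsto (fun x => f x / g x) atTop (𝓝 L)) :
    Tendsto (fun x => F x / G x) atTop (𝓝 L) := by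
  have hsmall : (fun x => f x - L * g x) =o[atTop] g := by
    refine (isLittleO_iff_tendsto fun x hx => absurd hx (hg x).ne').2 ?_
    have : Tendsto (fun x => f x / g x - L) atTop (𝓝 0) := by
      simpa using hfg.sub_const L
    refine this.congr fun x => ?_
    field_simp [(hg x).ne']
  have hrest := (isLittleO_of_hasDerivAt_of_isLittleO (fun x => (hF x).sub ((hG x).const_mul L))
    hG (fun x => (hg x).le) hGtop hsmall).tendsto_div_nhds_zero
  refine (zero_add L ▸ hrest.add_const L).congr' ?_
  filter_upwards [hGtop.eventually_gt_atTop 0] with x hx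
  simp only [Pi.sub_apply]
  field_simp
  ring

namespace IsPFSS

variable {r q q₁ u v u₁ v₁ : ℝ → ℝ}

theorem left_pos (h : IsPFSS r q u v) (x : ℝ) : 0 < u x := h.2.2.1 x

theorem right_pos (h : IsPFSS r q u v) (x : ℝ) : 0 < v x := h.2.2.2.1 x

theorem tendsto_left_div_right (h : IsPFSS r q u v) :
    Tendsto (fun x => u x / v x) atTop (𝓝 0) :=
  h.2.2.2.2.2.2.2.1

theorem hasDerivAt_right_div_left (h : IsPFSS r q u v) (x : ℝ) :
    HasDerivAt (fun y => v y / u y) (r x * u x ^ 2)⁻¹ x := by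
  obtain ⟨⟨hu, -⟩, ⟨hv, -⟩, hupos, -, -, -, hW, -⟩ := h
  refine ((hv x).hasDerivAt.div (hu x).hasDerivAt (hupos x).ne').congr_deriv ?_
  have hr : r x ≠ 0 := left_ne_zero_of_mul_eq_one (hW x)
  field_simp [(hupos x).ne']
  linear_combination hW x

theorem hasDerivAt_left_div_right (h : IsPFSS r q u v) (x : ℝ) :
    HasDerivAt (fun y => u y / v y) (-(r x * v x ^ 2)⁻¹) x := by
  obtain ⟨⟨hu, -⟩, ⟨hv, -⟩, -, hvpos, -, -, hW, -⟩ := h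
  refine ((hu x).hasDerivAt.div (hv x).hasDerivAt (hvpos x).ne').congr_deriv ?_
  have hr : r x ≠ 0 := left_ne_zero_of_mul_eq_one (hW x)
  field_simp [(hvpos x).ne']
  linear_combination -hW x

theorem tendsto_right_div_left_atTop (h : IsPFSS r q u v) :
    Tendsto (fun x => v x / u x) atTop atTop := by
  have hlim : Tendsto (fun x => u x / v x) atTop (𝓝[>] 0) :=
    tendsto_nhdsWithin_of_tendsto_nhds_of_eventually_within _ h.tendsto_left_div_right
      (Eventually.of_forall fun x => div_pos (h.left_pos x) (h.right_pos x))
  exact hlim.inv_tendsto_nhdsGT_zero.congr fun x => inv_div (u x) (v x)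

theorem eq_zero_of_tendsto_div (h : IsPFSS r q u v) (h₁ : IsPFSS r q₁ u₁ v₁)
    (hr : ∀ x, 0 < r x) {β : ℝ} (hβ : Tendsto (fun x => u₁ x / v x) atTop (𝓝 β)) : β = 0 := by
  have hratio :
      Tendsto (fun x => -(r x * v x ^ 2)⁻¹ / (r x * u₁ x ^ 2)⁻¹) atTop (𝓝 (-β ^ 2)) := by
    refine (hβ.pow 2).neg.congr fun x => ?_
    have := (hr x).ne'
    have := (h.right_pos x).ne'
    have := (h₁.left_pos x).ne'
    field_simp
  have hlhopital := lhopital_atTop_of_tendsto_atTop h.hasDerivAt_left_div_right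
    h₁.hasDerivAt_right_div_left (fun x => inv_pos.2 (mul_pos (hr x) (pow_pos (h₁.left_pos x) 2)))
    h₁.tendsto_right_div_left_atTop hratio
  have hzero := h.tendsto_left_div_right.div_atTop h₁.tendsto_right_div_left_atTop
  simpa using tendsto_nhds_unique hlhopital hzero

theorem tendsto_mul_div_mul (h : IsPFSS r q u v) (h₁ : IsPFSS r q₁ u₁ v₁)
    (hr : ∀ x, 0 < r x) {a : ℝ} (ha : a ≠ 0) (hlim : Tendsto (fun x => u x / u₁ x) atTop (𝓝 a)) :
    Tendsto (fun x => u x * v x / (u₁ x * v₁ x)) atTop (𝓝 1) := by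
  have hratio :
      Tendsto (fun x => (r x * u x ^ 2)⁻¹ / (r x * u₁ x ^ 2)⁻¹) atTop (𝓝 (a⁻¹ ^ 2)) := by
    refine ((hlim.inv₀ ha).pow 2).congr fun x => ?_
    have := (hr x).ne'
    have := (h.left_pos x).ne'
    have := (h₁.left_pos x).ne'
    field_simp
  have hlhopital := lhopital_atTop_of_tendsto_atTop h.hasDerivAt_right_div_left
    h₁.hasDerivAt_right_div_left (fun x => inv_pos.2 (mul_pos (hr x) (pow_pos (h₁.left_pos x) 2)))
    h₁.tendsto_right_div_left_atTop hratio
  have hprod := (hlim.pow 2).mul hlhopital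
  rw [← mul_pow, mul_inv_cancel₀ ha, one_pow] at hprod
  refine hprod.congr fun x => ?_
  have := (h.left_pos x).ne'
  have := (h.right_pos x).ne'
  have := (h₁.left_pos x).ne'
  have := (h₁.right_pos x).ne'
  field_simp

end IsPFSS

theorem stmt19_general (r q q₁ u v u₁ v₁ uhat : ℝ → ℝ) (hr : ∀ x, 0 < r x)
    (h : IsPFSS r q u v) (h₁ : IsPFSS r q₁ u₁ v₁)
    (hlim : Tendsto (fun x => uhat x / u₁ x) atTop (nhds 1))
    (α β : ℝ) (hαβ : ∀ x, uhat x = α * u x + β * v x) :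
    β = 0 ∧ 0 < α ∧ Tendsto (fun x => u x / u₁ x) atTop (nhds α⁻¹) ∧
    Tendsto (fun x => (u x * v x) / (u₁ x * v₁ x)) atTop (nhds 1) := by
  have huhat_v : Tendsto (fun x => uhat x / v x) atTop (𝓝 β) := by
    have := (h.tendsto_left_div_right.const_mul α).add_const β
    rw [mul_zero, zero_add] at this
    refine this.congr fun x => ?_
    rw [hαβ x]
    field_simp [(h.right_pos x).ne']
  have hu₁_v : Tendsto (fun x => u₁ x / v x) atTop (𝓝 β) := by
    refine (div_one β ▸ huhat_v.div hlim one_ne_zero).congr' ?_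
    filter_upwards [hlim.eventually_ne one_ne_zero] with x hx
    have := (div_ne_zero_iff.1 hx).1
    simp only [Pi.div_apply]
    field_simp [(h₁.left_pos x).ne', (h.right_pos x).ne']
  obtain rfl := h.eq_zero_of_tendsto_div h₁ hr hu₁_v
  have hαu : Tendsto (fun x => α * (u x / u₁ x)) atTop (𝓝 1) :=
    hlim.congr fun x => by rw [hαβ x, zero_mul, add_zero, mul_div_assoc]
  have hα : 0 < α := by
    by_contra! hα
    have : (1 : ℝ) ≤ 0 := le_of_tendsto' hαu fun x =>
      mul_nonpos_of_nonpos_of_nonneg hα (div_pos (h.left_pos x) (h₁.left_pos x)).le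
    norm_num at this
  have hu_u₁ : Tendsto (fun x => u x / u₁ x) atTop (𝓝 α⁻¹) := by
    simpa only [inv_mul_cancel_left₀ hα.ne', mul_one] using hαu.const_mul α⁻¹
  exact ⟨rfl, hα, hu_u₁, h.tendsto_mul_div_mul h₁ hr (inv_ne_zero hα.ne') hu_u₁⟩

theorem stmt19 (r q q₁ u v u₁ v₁ uhat : ℝ → ℝ) (hrc : Continuous r)
    (hqc : Continuous q) (hq₁c : Continuous q₁) (hr : ∀ x, 0 < r x)
    (h : IsPFSS r q u v) (h₁ : IsPFSS r q₁ u₁ v₁) (huhat : IsSol r q uhat)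
    (hlim : Tendsto (fun x => uhat x / u₁ x) atTop (nhds 1))
    (α β : ℝ) (hαβ : ∀ x, uhat x = α * u x + β * v x) :
    β = 0 ∧ 0 < α ∧ Tendsto (fun x => u x / u₁ x) atTop (nhds α⁻¹) ∧
    Tendsto (fun x => (u x * v x) / (u₁ x * v₁ x)) atTop (nhds 1) :=
  stmt19_general r q q₁ u v u₁ v₁ uhat hr h h₁ hlim α β hαβ
end
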